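/- arXiv:1511.05547 — 3 statements merged into one kernel-verified Lean document; each statement's English description precedes it below -/
import Mathlib

section
/- (Eckart–Young for Frobenius norm) Let Y be a real m×n matrix with singular value decomposition Y = U Σ Vᵀ, and let r ≤ rank(Y). Then among all real m×n matrices X with rank(X) ≤ r, the truncated SVD X* = U_{[1:r]} Σ_{[1:r]} V_{[1:r]}ᵀ minimizes ‖X − Y‖_F. -/
/-!
Let `P` be the orthogonal projection onto `ker (X V)`, so that `tr P = n - rank X ≥ n - r`.
Since `X V P = 0` and `Y V = U S`,
`‖X - Y‖² = ‖X V - Y V‖² ≥ ‖(X V - U S) P‖² = ‖S P‖² = ∑ⱼ σⱼ² Pⱼⱼ`.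
The weights `Pⱼⱼ` lie in `[0, 1]` and sum to at least `n - r`, so with decreasing `σⱼ²` this is
at least the sum of the `n - r` smallest `σⱼ²`, which is `‖X* - Y‖²` (bathtub principle).
-/

open Matrix

open scoped BigOperators

/-- Squared Frobenius norm. -/
noncomputable def frobNorm {m n : ℕ} (M : Matrix (Fin m) (Fin n) ℝ) : ℝ :=
  Real.sqrt (∑ i, ∑ j, (M i j) ^ 2)

open scoped Finset

theorem sum_le_sum_mul_of_bathtub {ι : Type*} [Fintype ι] (s : Finset ι) (d t : ι → ℝ) (c : ℝ)
    (hc : 0 ≤ c) (hs : ∀ j ∈ s, d j ≤ c) (hsc : ∀ j ∉ s, c ≤ d j)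
    (ht : ∀ j, t j ∈ Set.Icc 0 1) (hst : (s.card : ℝ) ≤ ∑ j, t j) :
    ∑ j ∈ s, d j ≤ ∑ j, d j * t j := by
  classical
  set χ : ι → ℝ := fun j => if j ∈ s then 1 else 0
  have hχ : ∑ j, χ j = s.card := by simp [χ]
  have hdχ : ∑ j ∈ s, d j = ∑ j, d j * χ j := by simp [χ, Finset.sum_ite_mem]
  have hterm : ∀ j, 0 ≤ (d j - c) * (t j - χ j) := by
    intro j
    by_cases hj : j ∈ s
    · simp only [χ, if_pos hj]
      exact mul_nonneg_of_nonpos_of_nonpos (by linarith [hs j hj]) (by linarith [(ht j).2])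
    · simp only [χ, if_neg hj]
      exact mul_nonneg (by linarith [hsc j hj]) (by linarith [(ht j).1])
  have hsplit : ∑ j, d j * t j - ∑ j, d j * χ j
      = ∑ j, (d j - c) * (t j - χ j) + c * (∑ j, t j - ∑ j, χ j) := by
    simp only [mul_sub, sub_mul, Finset.sum_sub_distrib, ← Finset.mul_sum]
    ring
  have hsum := Finset.sum_nonneg fun j (_ : j ∈ Finset.univ) => hterm j
  have hmass := mul_nonneg hc (show 0 ≤ ∑ j, t j - ∑ j, χ j by linarith)
  linarith

theorem Fin.card_filter_le_val (n r : ℕ) : #{j : Fin n | r ≤ (j : ℕ)} = n - r := by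
  have h := Finset.card_filter_add_card_filter_not (s := Finset.univ) (fun j : Fin n => (j : ℕ) < r)
  simp only [not_lt, Fin.card_filter_val_lt, Finset.card_univ, Fintype.card_fin] at h
  omega

theorem sum_tail_le_sum_mul {n : ℕ} (r : ℕ) {d : ℕ → ℝ} (hd : ∀ j, 0 ≤ d j) (hanti : Antitone d)
    (t : Fin n → ℝ) (ht : ∀ j, t j ∈ Set.Icc 0 1) (hst : ((n - r : ℕ) : ℝ) ≤ ∑ j, t j) :
    ∑ j ∈ {j : Fin n | r ≤ (j : ℕ)}, d j ≤ ∑ j : Fin n, d j * t j := by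
  refine sum_le_sum_mul_of_bathtub _ (fun j : Fin n => d j) t (d r) (hd r) (fun j hj => ?_)
    (fun j hj => ?_) ht (by rwa [Fin.card_filter_le_val])
  · exact hanti (Finset.mem_filter.mp hj).2
  · exact hanti (not_le.mp (by simpa using hj)).le

open scoped MatrixOrder in
theorem IsStarProjection.diag_mem_Icc {n : Type*} [Fintype n] [DecidableEq n]
    {P : Matrix n n ℝ} (hP : IsStarProjection P) (j : n) : P j j ∈ Set.Icc 0 1 := by
  have h₀ := (nonneg_iff_posSemidef.mp hP.nonneg).diag_nonneg (i := j)
  have h₁ := (nonneg_iff_posSemidef.mp hP.one_sub.nonneg).diag_nonneg (i := j)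
  rw [Matrix.sub_apply, one_apply_eq, sub_nonneg] at h₁
  exact ⟨h₀, h₁⟩

theorem exists_isStarProjection_mul_eq_zero_and_trace_eq {𝕜 m n : Type*} [RCLike 𝕜]
    [Fintype m] [Fintype n] [DecidableEq n] (A : Matrix m n 𝕜) :
    ∃ P : Matrix n n 𝕜, IsStarProjection P ∧ A * P = 0 ∧
      P.trace = ((Fintype.card n - A.rank : ℕ) : 𝕜) := by
  set K := LinearMap.ker (toEuclideanLin A)
  set e : Matrix n n 𝕜 ≃⋆ₐ[𝕜] (EuclideanSpace 𝕜 n →L[𝕜] EuclideanSpace 𝕜 n) := toEuclideanCLM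
  set P := e.symm K.starProjection
  have hPK : e P = K.starProjection := by simp [P]
  refine ⟨P, isStarProjection_starProjection.map e.symm, ?_, ?_⟩
  · refine Matrix.ext_of_mulVec_single fun j => ?_
    have hmem : K.starProjection (WithLp.toLp 2 (Pi.single j 1)) ∈ K :=
      K.starProjection_apply_mem _
    rw [← hPK, toEuclideanCLM_toLp, LinearMap.mem_ker, toLpLin_apply] at hmem
    rw [← Matrix.mulVec_mulVec, zero_mulVec]
    simpa using hmem
  · have hproj : LinearMap.IsProj K (toEuclideanLin P) := by
      rw [← coe_toEuclideanCLM_eq_toEuclideanLin]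
      refine ⟨fun x => ?_, fun x hx => ?_⟩
      · change e P x ∈ K
        exact hPK ▸ K.starProjection_apply_mem x
      · change e P x = x
        exact hPK ▸ K.starProjection_eq_self_iff.mpr hx
    have hrank : A.rank + Module.finrank 𝕜 K = Fintype.card n := by
      rw [rank_eq_finrank_range_toLin A (PiLp.basisFun 2 𝕜 m) (PiLp.basisFun 2 𝕜 n),
        ← toLpLin_eq_toLin, LinearMap.finrank_range_add_finrank_ker]
      simp
    rw [← trace_toLin_eq P (PiLp.basisFun 2 𝕜 n), ← toLpLin_eq_toLin, hproj.trace]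
    congr 1
    omega

theorem IsStarProjection.transpose_eq {n : Type*} [Fintype n] {P : Matrix n n ℝ}
    (hP : IsStarProjection P) : Pᵀ = P := by
  rw [← conjTranspose_eq_transpose_of_trivial, ← star_eq_conjTranspose, hP.isSelfAdjoint]

section Trace
variable {m n : Type*} [Fintype m] [Fintype n]

theorem trace_transpose_mul_self (M : Matrix m n ℝ) :
    (Mᵀ * M).trace = ∑ i, ∑ j, M i j ^ 2 := by
  simp only [trace, diag, mul_apply, transpose_apply, sq]
  exact Finset.sum_comm

theorem trace_transpose_mul_self_mul_isStarProjection (M : Matrix m n ℝ) {P : Matrix n n ℝ}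
    (hP : IsStarProjection P) : ((M * P)ᵀ * (M * P)).trace = (Mᵀ * M * P).trace := by
  rw [transpose_mul, hP.transpose_eq, Matrix.mul_assoc, trace_mul_comm,
    Matrix.mul_assoc, Matrix.mul_assoc, hP.isIdempotentElem.eq, Matrix.mul_assoc]

end Trace

section Frobenius
variable {m n : ℕ}

theorem frobNorm_eq_sqrt_trace (M : Matrix (Fin m) (Fin n) ℝ) :
    frobNorm M = √(Mᵀ * M).trace := by
  rw [frobNorm, trace_transpose_mul_self]

theorem frobNorm_sub_comm (A B : Matrix (Fin m) (Fin n) ℝ) :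
    frobNorm (A - B) = frobNorm (B - A) := by
  rw [← neg_sub, frobNorm_eq_sqrt_trace, frobNorm_eq_sqrt_trace, transpose_neg, Matrix.neg_mul,
    Matrix.mul_neg, neg_neg]

theorem frobNorm_orthogonal_mul {U : Matrix (Fin m) (Fin m) ℝ} (hU : Uᵀ * U = 1)
    (M : Matrix (Fin m) (Fin n) ℝ) : frobNorm (U * M) = frobNorm M := by
  rw [frobNorm_eq_sqrt_trace, frobNorm_eq_sqrt_trace, transpose_mul, Matrix.mul_assoc,
    ← Matrix.mul_assoc Uᵀ, hU, Matrix.one_mul]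

theorem frobNorm_mul_orthogonal {V : Matrix (Fin n) (Fin n) ℝ} (hV : V * Vᵀ = 1)
    (M : Matrix (Fin m) (Fin n) ℝ) : frobNorm (M * V) = frobNorm M := by
  rw [frobNorm_eq_sqrt_trace, frobNorm_eq_sqrt_trace, transpose_mul, Matrix.mul_assoc,
    trace_mul_comm, Matrix.mul_assoc, Matrix.mul_assoc, hV, Matrix.mul_one]

theorem frobNorm_mul_le_of_isStarProjection (M : Matrix (Fin m) (Fin n) ℝ)
    {P : Matrix (Fin n) (Fin n) ℝ} (hP : IsStarProjection P) :
    frobNorm (M * P) ≤ frobNorm M := by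
  rw [frobNorm_eq_sqrt_trace, frobNorm_eq_sqrt_trace]
  refine Real.sqrt_le_sqrt ?_
  have hsplit : (Mᵀ * M).trace = (Mᵀ * M * P).trace + (Mᵀ * M * (1 - P)).trace := by
    rw [Matrix.mul_sub, Matrix.mul_one, trace_sub]
    ring
  have hrest : 0 ≤ (Mᵀ * M * (1 - P)).trace := by
    rw [← trace_transpose_mul_self_mul_isStarProjection M hP.one_sub, trace_transpose_mul_self]
    positivity
  rw [trace_transpose_mul_self_mul_isStarProjection M hP]
  linarith

end Frobenius

def rectDiagonal (m n : ℕ) (τ : ℕ → ℝ) : Matrix (Fin m) (Fin n) ℝ :=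
  fun i j => if (i : ℕ) = j then τ i else 0

/-- The squared norm of column `j` of `rectDiagonal m n τ`. -/
def colNormSq (m : ℕ) (τ : ℕ → ℝ) (j : ℕ) : ℝ :=
  if j < m then τ j ^ 2 else 0

theorem colNormSq_nonneg (m : ℕ) (τ : ℕ → ℝ) (j : ℕ) : 0 ≤ colNormSq m τ j := by
  unfold colNormSq
  split_ifs <;> positivity

theorem antitone_colNormSq (m : ℕ) {τ : ℕ → ℝ} (hτ : ∀ i, 0 ≤ τ i) (hanti : Antitone τ) :
    Antitone (colNormSq m τ) := by
  intro i j hij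
  unfold colNormSq
  split_ifs with hj hi hi
  · exact pow_le_pow_left₀ (hτ j) (hanti hij) 2
  · omega
  · positivity
  · exact le_rfl

theorem transpose_mul_self_rectDiagonal (m n : ℕ) (τ : ℕ → ℝ) :
    (rectDiagonal m n τ)ᵀ * rectDiagonal m n τ = diagonal fun j : Fin n => colNormSq m τ j := by
  ext j k
  simp only [mul_apply, transpose_apply, rectDiagonal, diagonal_apply, colNormSq]
  by_cases hjk : j = k
  · subst hjk
    rw [if_pos rfl, Fin.sum_univ_eq_sum_range (fun i => (if i = (j : ℕ) then τ i else 0) *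
      (if i = (j : ℕ) then τ i else 0))]
    simp [sq]
  · rw [if_neg hjk]
    refine Finset.sum_eq_zero fun i _ => ?_
    split_ifs with h₁ h₂ <;> first | exact absurd (Fin.ext (h₁.symm.trans h₂)) hjk | simp

theorem frobNorm_rectDiagonal_mul {m n : ℕ} (τ : ℕ → ℝ) {P : Matrix (Fin n) (Fin n) ℝ}
    (hP : IsStarProjection P) :
    frobNorm (rectDiagonal m n τ * P) = √(∑ j : Fin n, colNormSq m τ j * P j j) := by
  rw [frobNorm_eq_sqrt_trace, trace_transpose_mul_self_mul_isStarProjection _ hP,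
    transpose_mul_self_rectDiagonal]
  simp [trace, diagonal_mul]

theorem frobNorm_rectDiagonal {m n : ℕ} (τ : ℕ → ℝ) :
    frobNorm (rectDiagonal m n τ) = √(∑ j : Fin n, colNormSq m τ j) := by
  simpa using frobNorm_rectDiagonal_mul (m := m) τ (IsStarProjection.one (Matrix (Fin n) (Fin n) ℝ))

theorem frobNorm_rectDiagonal_sub_truncate {m n : ℕ} (τ : ℕ → ℝ) (r : ℕ) :
    frobNorm (rectDiagonal m n τ - rectDiagonal m n fun i => if i < r then τ i else 0)
      = √(∑ j ∈ {j : Fin n | r ≤ (j : ℕ)}, colNormSq m τ j) := by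
  have htail : rectDiagonal m n τ - (rectDiagonal m n fun i => if i < r then τ i else 0)
      = rectDiagonal m n fun i => if r ≤ i then τ i else 0 := by
    ext i j
    simp only [Matrix.sub_apply, rectDiagonal]
    split_ifs <;> first | (exfalso; omega) | simp
  rw [htail, frobNorm_rectDiagonal, Finset.sum_filter]
  congr 1
  refine Finset.sum_congr rfl fun j _ => ?_
  by_cases hjr : r ≤ (j : ℕ) <;> simp [colNormSq, hjr]

theorem eckart_young_frobenius_general (m n : ℕ) (Y : Matrix (Fin m) (Fin n) ℝ)
    (U : Matrix (Fin m) (Fin m) ℝ) (V : Matrix (Fin n) (Fin n) ℝ)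
    (σ : ℕ → ℝ) (S : Matrix (Fin m) (Fin n) ℝ)
    (hU : Uᵀ * U = 1) (hV : Vᵀ * V = 1)
    (hσ : ∀ i, 0 ≤ σ i) (hmono : ∀ i j, i ≤ j → σ j ≤ σ i)
    (hS : ∀ i j, S i j = if (i : ℕ) = (j : ℕ) then σ (i : ℕ) else 0)
    (hY : Y = U * S * Vᵀ)
    (r : ℕ)
    (Sr : Matrix (Fin m) (Fin n) ℝ)
    (hSr : ∀ i j, Sr i j =
      if (i : ℕ) = (j : ℕ) ∧ (i : ℕ) < r then σ (i : ℕ) else 0) :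
    ∀ X : Matrix (Fin m) (Fin n) ℝ, X.rank ≤ r →
      frobNorm (U * Sr * Vᵀ - Y) ≤ frobNorm (X - Y) := by
  intro X hX
  obtain ⟨P, hP, hXVP, htrace⟩ := exists_isStarProjection_mul_eq_zero_and_trace_eq (X * V)
  have hS' : S = rectDiagonal m n σ := Matrix.ext hS
  have hSr' : Sr = rectDiagonal m n fun i => if i < r then σ i else 0 :=
    Matrix.ext fun i j => by rw [hSr, rectDiagonal, ite_and]
  have hweights : ((n - r : ℕ) : ℝ) ≤ ∑ j, P j j := by
    rw [show ∑ j, P j j = P.trace from rfl, htrace, Fintype.card_fin]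
    have hrank := (rank_mul_le_left X V).trans hX
    exact_mod_cast (by omega)
  calc frobNorm (U * Sr * Vᵀ - Y) = frobNorm (S - Sr) := by
        rw [frobNorm_sub_comm, hY, ← Matrix.sub_mul, ← Matrix.mul_sub,
          frobNorm_mul_orthogonal (by simpa using hV), frobNorm_orthogonal_mul hU]
    _ = √(∑ j ∈ {j : Fin n | r ≤ (j : ℕ)}, colNormSq m σ j) := by
        rw [hS', hSr', frobNorm_rectDiagonal_sub_truncate]
    _ ≤ √(∑ j : Fin n, colNormSq m σ j * P j j) :=
        Real.sqrt_le_sqrt <| sum_tail_le_sum_mul r (colNormSq_nonneg m σ)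
          (antitone_colNormSq m hσ fun i j => hmono i j) _ hP.diag_mem_Icc hweights
    _ = frobNorm (U * (S * P)) := by
        rw [frobNorm_orthogonal_mul hU, hS', frobNorm_rectDiagonal_mul _ hP]
    _ = frobNorm ((X - Y) * V * P) := by
        rw [Matrix.sub_mul, Matrix.sub_mul, hXVP, hY, Matrix.mul_assoc _ Vᵀ V, hV,
          Matrix.mul_one, zero_sub, ← zero_sub, frobNorm_sub_comm, sub_zero, Matrix.mul_assoc]
    _ ≤ frobNorm ((X - Y) * V) := frobNorm_mul_le_of_isStarProjection _ hP
    _ = frobNorm (X - Y) := frobNorm_mul_orthogonal (mul_eq_one_comm.mp hV) _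

/-- Eckart–Young theorem for the Frobenius norm: given an SVD `Y = U S Vᵀ` with
singular values `σ` in decreasing order, the rank-`r` truncation minimizes
`‖X - Y‖_F` over all matrices `X` of rank at most `r`. -/
theorem eckart_young_frobenius (m n : ℕ) (Y : Matrix (Fin m) (Fin n) ℝ)
    (U : Matrix (Fin m) (Fin m) ℝ) (V : Matrix (Fin n) (Fin n) ℝ)
    (σ : ℕ → ℝ) (S : Matrix (Fin m) (Fin n) ℝ)
    (hU : Uᵀ * U = 1) (hV : Vᵀ * V = 1)
    (hσ : ∀ i, 0 ≤ σ i) (hmono : ∀ i j, i ≤ j → σ j ≤ σ i)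
    (hS : ∀ i j, S i j = if (i : ℕ) = (j : ℕ) then σ (i : ℕ) else 0)
    (hY : Y = U * S * Vᵀ)
    (r : ℕ) (hr : r ≤ Y.rank)
    (Sr : Matrix (Fin m) (Fin n) ℝ)
    (hSr : ∀ i j, Sr i j =
      if (i : ℕ) = (j : ℕ) ∧ (i : ℕ) < r then σ (i : ℕ) else 0) :
    ∀ X : Matrix (Fin m) (Fin n) ℝ, X.rank ≤ r →
      frobNorm (U * Sr * Vᵀ - Y) ≤ frobNorm (X - Y) :=
  eckart_young_frobenius_general m n Y U V σ S hU hV hσ hmono hS hY r Sr hSr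
end

section
/- Let C_S, C_T be real symmetric positive semidefinite n×n matrices, and suppose rank(C_S) ≥ rank(C_T). Then there exists a real n×n matrix A with Aᵀ C_S A = C_T, i.e., the minimum of ‖Aᵀ C_S A − C_T‖_F² over A is 0. -/
/-!
Both matrices are orthogonally diagonalized, `C_S ≅ diag d` and `C_T ≅ diag e` with `d, e ≥ 0`,
where `≅` is congruence `X ↦ Aᵀ X A`. Since `d` has at least as many nonzero entries as `e`, a
permutation of the coordinates moves the support of `e` into that of `d`, and the diagonal
scaling by `√(eᵢ / dᵢ)` then turns `diag d` into `diag e`.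
-/

open Matrix

namespace Matrix

variable {ι R : Type*} [Fintype ι]

def CongruentTo [CommSemiring R] (X Y : Matrix ι ι R) : Prop :=
  ∃ A : Matrix ι ι R, Aᵀ * X * A = Y

theorem CongruentTo.trans [CommSemiring R] {X Y Z : Matrix ι ι R} (hXY : X.CongruentTo Y)
    (hYZ : Y.CongruentTo Z) : X.CongruentTo Z := by
  obtain ⟨A, rfl⟩ := hXY
  obtain ⟨B, rfl⟩ := hYZ
  exact ⟨A * B, by simp only [transpose_mul, Matrix.mul_assoc]⟩

variable [DecidableEq ι]

theorem congruentTo_diagonal_comp_perm [CommSemiring R] (d : ι → R) (σ : Equiv.Perm ι) :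
    (diagonal d).CongruentTo (diagonal (d ∘ σ)) := by
  refine ⟨(σ⁻¹).permMatrix R, ?_⟩
  simp only [transpose_permMatrix, inv_inv, PEquiv.toMatrix_toPEquiv_mul,
    PEquiv.mul_toMatrix_toPEquiv, submatrix_submatrix]
  exact submatrix_diagonal_equiv d σ

theorem congruentTo_diagonal_of_support_subset {d e : ι → ℝ} (hd : ∀ i, 0 ≤ d i)
    (he : ∀ i, 0 ≤ e i) (hde : Function.support e ⊆ Function.support d) :
    (diagonal d).CongruentTo (diagonal e) := by
  refine ⟨diagonal fun i => √(e i / d i), ?_⟩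
  rw [diagonal_transpose, diagonal_mul_diagonal, diagonal_mul_diagonal]
  congr 1
  ext i
  by_cases hei : e i = 0
  · simp [hei]
  · have hdi := (hd i).lt_of_ne' (hde hei)
    rw [mul_right_comm, Real.mul_self_sqrt (div_nonneg (he i) hdi.le), div_mul_cancel₀ _ hdi.ne']

end Matrix

theorem Equiv.Perm.exists_forall_imp_of_card_le {ι : Type*} [Fintype ι] {p q : ι → Prop}
    [DecidablePred p] [DecidablePred q]
    (h : Fintype.card {i // p i} ≤ Fintype.card {i // q i}) :
    ∃ σ : Equiv.Perm ι, ∀ i, p i → q (σ i) := by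
  obtain ⟨f⟩ := Function.Embedding.nonempty_of_card_le h
  obtain ⟨σ, hσ⟩ := Equiv.Perm.exists_extending_pair (Subtype.val : {i // p i} → ι)
    (fun i => (f i).val) Subtype.val_injective (Subtype.val_injective.comp f.injective)
  exact ⟨σ, fun i hi => hσ ⟨i, hi⟩ ▸ (f ⟨i, hi⟩).2⟩

namespace Matrix

variable {ι : Type*} [Fintype ι] [DecidableEq ι]

theorem congruentTo_diagonal_of_card_le {d e : ι → ℝ} (hd : ∀ i, 0 ≤ d i) (he : ∀ i, 0 ≤ e i)
    (h : Fintype.card {i // e i ≠ 0} ≤ Fintype.card {i // d i ≠ 0}) :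
    (diagonal d).CongruentTo (diagonal e) := by
  obtain ⟨σ, hσ⟩ := Equiv.Perm.exists_forall_imp_of_card_le h
  exact (congruentTo_diagonal_comp_perm d σ).trans
    (congruentTo_diagonal_of_support_subset (fun i => hd (σ i)) he hσ)

namespace IsHermitian

variable {A : Matrix ι ι ℝ}

theorem congruentTo_diagonal_eigenvalues (hA : A.IsHermitian) :
    A.CongruentTo (diagonal hA.eigenvalues) := by
  refine ⟨hA.eigenvectorUnitary, ?_⟩
  have := hA.conjStarAlgAut_star_eigenvectorUnitary
  rwa [Unitary.conjStarAlgAut_star_apply, star_eq_conjTranspose,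
    conjTranspose_eq_transpose_of_trivial] at this

theorem diagonal_eigenvalues_congruentTo (hA : A.IsHermitian) :
    (diagonal hA.eigenvalues).CongruentTo A := by
  refine ⟨(hA.eigenvectorUnitary : Matrix ι ι ℝ)ᵀ, ?_⟩
  conv_rhs => rw [hA.spectral_theorem]
  rw [Unitary.conjStarAlgAut_apply, star_eq_conjTranspose,
    conjTranspose_eq_transpose_of_trivial, transpose_transpose]
  rfl

end IsHermitian

end Matrix

/-- Case 1 of the CORAL theorem: if `rank C_S ≥ rank C_T`, there is a matrix `A`
with `Aᵀ C_S A = C_T`, i.e. the minimum of `‖Aᵀ C_S A - C_T‖_F²` is 0. -/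
theorem coral_rank_ge (n : ℕ) (CS CT : Matrix (Fin n) (Fin n) ℝ)
    (hS : CS.PosSemidef) (hT : CT.PosSemidef)
    (hrank : CT.rank ≤ CS.rank) :
    ∃ A : Matrix (Fin n) (Fin n) ℝ, Aᵀ * CS * A = CT := by
  have hcard : Fintype.card {i // hT.1.eigenvalues i ≠ 0}
      ≤ Fintype.card {i // hS.1.eigenvalues i ≠ 0} := by
    rwa [← hT.1.rank_eq_card_non_zero_eigs, ← hS.1.rank_eq_card_non_zero_eigs]
  exact (hS.1.congruentTo_diagonal_eigenvalues.trans
    (congruentTo_diagonal_of_card_le hS.eigenvalues_nonneg hT.eigenvalues_nonneg hcard)).trans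
    hT.1.diagonal_eigenvalues_congruentTo
end

section
/- Let C_S, C_T be real symmetric positive semidefinite n×n matrices and set r = min(rank C_S, rank C_T). For every real n×n matrix A, ‖Aᵀ C_S A − C_T‖_F ≥ ‖C_T − T_r(C_T)‖_F, where T_r(C_T) = U_{T[1:r]} Σ_{T[1:r]} U_{T[1:r]}ᵀ is the best rank-r approximation of C_T given by its top r eigenpairs. -/
/-!
Put `B = Aᵀ C_S A`, so `rank B ≤ s := rank C_S`, and `X = C_T - B`. For `j ≥ s` the span of the
top `j + 1` eigenvectors of `C_T` meets `ker B` in dimension at least `j + 1 - s`, and there the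
quadratic form of `X` equals that of `C_T`, hence is at least `μ_j`. By min–max, `X` then has at
least `j + 1 - s` eigenvalues `≥ μ_j`, and matching these counts greedily gives
`∑_{j ≥ s} μ_j² ≤ ∑ λ_i(X)² = ‖X‖_F²`. If instead `r = rank C_T < s`, the terms `μ_j` with
`r ≤ j < s` vanish.
-/

open Matrix Finset Module

open scoped InnerProductSpace

def frobeniusSq {m n : Type*} [Fintype m] [Fintype n] (M : Matrix m n ℝ) : ℝ :=
  ∑ i, ∑ j, M i j ^ 2

lemma frobeniusSq_eq_trace {m n : Type*} [Fintype m] [Fintype n] (M : Matrix m n ℝ) :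
    frobeniusSq M = trace (Mᵀ * M) := by
  rw [frobeniusSq, Finset.sum_comm]
  simp [trace, mul_apply, sq]

lemma frobeniusSq_neg {m n : Type*} [Fintype m] [Fintype n] (M : Matrix m n ℝ) :
    frobeniusSq (-M) = frobeniusSq M := by
  simp [frobeniusSq]

section
variable {m : Type*} [Fintype m] [DecidableEq m]

lemma frobeniusSq_conj_diagonal {V : Matrix m m ℝ} (hV : Vᵀ * V = 1) (d : m → ℝ) :
    frobeniusSq (V * diagonal d * Vᵀ) = ∑ i, d i ^ 2 := by
  have hsq : (V * diagonal d * Vᵀ)ᵀ * (V * diagonal d * Vᵀ) =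
      V * (diagonal (fun i => d i ^ 2) * Vᵀ) := by
    simp only [transpose_mul, transpose_transpose, diagonal_transpose, Matrix.mul_assoc]
    rw [← Matrix.mul_assoc Vᵀ V, hV, Matrix.one_mul, ← Matrix.mul_assoc (diagonal d),
      diagonal_mul_diagonal]
    simp only [sq]
  rw [frobeniusSq_eq_trace, hsq, trace_mul_comm, Matrix.mul_assoc, hV, Matrix.mul_one,
    trace_diagonal]

lemma Matrix.IsHermitian.frobeniusSq_eq_sum_eigenvalues_sq {X : Matrix m m ℝ}
    (hX : X.IsHermitian) : frobeniusSq X = ∑ i, hX.eigenvalues i ^ 2 := by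
  set W : Matrix m m ℝ := (hX.eigenvectorUnitary : Matrix m m ℝ)
  have hW : Wᵀ * W = 1 := Unitary.coe_star_mul_self hX.eigenvectorUnitary
  have hdiag : X = W * diagonal hX.eigenvalues * Wᵀ := by
    conv_lhs => rw [hX.spectral_theorem]
    simp [Unitary.conjStarAlgAut_apply, W, star_eq_conjTranspose]
  rw [← frobeniusSq_conj_diagonal hW, ← hdiag]
end

/-- The least element of `t` is matched with a maximiser of `g` on `s`, and both are removed. -/
theorem Finset.sum_le_sum_of_card_filter_le_card_filter {κ ι : Type*} [LinearOrder κ]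
    [DecidableEq ι] (t : Finset κ) (s : Finset ι) (f : κ → ℝ) (g : ι → ℝ)
    (hg : ∀ i ∈ s, 0 ≤ g i) (h : ∀ j ∈ t, #{j' ∈ t | j' ≤ j} ≤ #{i ∈ s | f j ≤ g i}) :
    ∑ j ∈ t, f j ≤ ∑ i ∈ s, g i := by
  induction t using Finset.induction_on_min generalizing s with
  | empty => exact sum_nonneg hg
  | insert a t ha_lt ih =>
    have ha : a ∉ t := fun ha => lt_irrefl a (ha_lt a ha)
    have hcard_a := h a (mem_insert_self a t)
    have hne : ({i ∈ s | f a ≤ g i} : Finset ι).Nonempty := by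
      rw [← card_pos]
      refine lt_of_lt_of_le (card_pos.2 ⟨a, ?_⟩) hcard_a
      simp
    obtain ⟨i₁, hi₁⟩ := hne
    obtain ⟨i₀, hi₀, hmax⟩ := s.exists_max_image g ⟨i₁, (mem_filter.1 hi₁).1⟩
    have hfa : f a ≤ g i₀ := (mem_filter.1 hi₁).2.trans (hmax i₁ (mem_filter.1 hi₁).1)
    have hrest : ∑ j ∈ t, f j ≤ ∑ i ∈ s.erase i₀, g i := by
      refine ih (s.erase i₀) (fun i hi => hg i (mem_of_mem_erase hi)) fun j hj => ?_
      have hcard_j := h j (mem_insert_of_mem hj)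
      rw [filter_insert, if_pos (ha_lt j hj).le,
        card_insert_of_notMem (fun h' => ha (mem_filter.1 h').1)] at hcard_j
      rw [filter_erase]
      exact le_trans (by omega) (pred_card_le_card_erase)
    calc ∑ j ∈ insert a t, f j = f a + ∑ j ∈ t, f j := sum_insert ha
      _ ≤ g i₀ + ∑ i ∈ s.erase i₀, g i := add_le_add hfa hrest
      _ = ∑ i ∈ s, g i := add_sum_erase s g hi₀

section
variable {E : Type*} [NormedAddCommGroup E] [InnerProductSpace ℝ E] {κ : Type*} [Fintype κ]
  {v : κ → E} {T : E →ₗ[ℝ] E} {a : κ → ℝ}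

lemma Orthonormal.inner_map_sum_of_apply_eq_smul (hv : Orthonormal ℝ v)
    (hT : ∀ k, T (v k) = a k • v k) (f : κ → ℝ) :
    ⟪∑ k, f k • v k, T (∑ k, f k • v k)⟫_ℝ = ∑ k, a k * f k ^ 2 := by
  have hTsum : T (∑ k, f k • v k) = ∑ k, (a k * f k) • v k := by
    simp only [map_sum, map_smul, hT, smul_smul, mul_comm]
  rw [hTsum, hv.inner_sum]
  refine sum_congr rfl fun k _ => ?_
  simp only [conj_trivial]
  ring

lemma Orthonormal.mul_inner_self_le_inner_map (hv : Orthonormal ℝ v)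
    (hT : ∀ k, T (v k) = a k • v k) {c : ℝ} (hc : ∀ k, c ≤ a k) {x : E}
    (hx : x ∈ Submodule.span ℝ (Set.range v)) : c * ⟪x, x⟫_ℝ ≤ ⟪x, T x⟫_ℝ := by
  obtain ⟨f, rfl⟩ := (Submodule.mem_span_range_iff_exists_fun ℝ).1 hx
  rw [hv.inner_map_sum_of_apply_eq_smul hT, hv.inner_sum, mul_sum]
  refine sum_le_sum fun k _ => ?_
  simpa [sq] using mul_le_mul_of_nonneg_right (hc k) (mul_self_nonneg (f k))

lemma Orthonormal.inner_map_lt_mul_inner_self (hv : Orthonormal ℝ v)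
    (hT : ∀ k, T (v k) = a k • v k) {c : ℝ} (hc : ∀ k, a k < c) {x : E}
    (hx : x ∈ Submodule.span ℝ (Set.range v)) (hx0 : x ≠ 0) : ⟪x, T x⟫_ℝ < c * ⟪x, x⟫_ℝ := by
  obtain ⟨f, rfl⟩ := (Submodule.mem_span_range_iff_exists_fun ℝ).1 hx
  obtain ⟨k₀, hk₀⟩ : ∃ k, f k ≠ 0 := by
    by_contra! hf
    simp [hf] at hx0
  rw [hv.inner_map_sum_of_apply_eq_smul hT, hv.inner_sum, mul_sum]
  refine sum_lt_sum (fun k _ => ?_) ⟨k₀, mem_univ _, ?_⟩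
  · simpa [sq] using mul_le_mul_of_nonneg_right (hc k).le (mul_self_nonneg (f k))
  · simpa [sq] using mul_lt_mul_of_pos_right (hc k₀) (mul_self_pos.2 hk₀)
end

lemma Submodule.finrank_add_finrank_sub_finrank_le_finrank_inf {K V : Type*} [DivisionRing K]
    [AddCommGroup V] [Module K V] [FiniteDimensional K V] (s t : Submodule K V) :
    finrank K s + finrank K t - finrank K V ≤ finrank K ↥(s ⊓ t) := by
  have := Submodule.finrank_sup_add_finrank_inf_eq s t
  have := (s ⊔ t).finrank_le
  omega

/-- Courant–Fischer, in counting form. -/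
lemma Matrix.IsHermitian.finrank_le_card_filter_le_eigenvalues {ι : Type*} [Fintype ι]
    [DecidableEq ι] {X : Matrix ι ι ℝ} (hX : X.IsHermitian) {c : ℝ}
    {S : Submodule ℝ (EuclideanSpace ℝ ι)}
    (hS : ∀ x ∈ S, c * ⟪x, x⟫_ℝ ≤ ⟪x, toEuclideanLin X x⟫_ℝ) :
    finrank ℝ S ≤ #{i | c ≤ hX.eigenvalues i} := by
  by_contra! hlt
  let v : {i // hX.eigenvalues i < c} → EuclideanSpace ℝ ι := fun i => hX.eigenvectorBasis i
  have hv : Orthonormal ℝ v := hX.eigenvectorBasis.orthonormal.comp _ Subtype.val_injective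
  have hXv : ∀ i, toEuclideanLin X (v i) = hX.eigenvalues i • v i := fun i =>
    congrArg (WithLp.toLp 2) (hX.mulVec_eigenvectorBasis i)
  let T := Submodule.span ℝ (Set.range v)
  have hT : finrank ℝ T + #{i | c ≤ hX.eigenvalues i} = Fintype.card ι := by
    rw [finrank_span_eq_card hv.linearIndependent, Fintype.card_subtype]
    simpa [not_lt, add_comm] using card_filter_add_card_filter_not (s := univ)
      (fun i => hX.eigenvalues i < c)
  have hST := Submodule.finrank_add_finrank_sub_finrank_le_finrank_inf S T
  rw [finrank_euclideanSpace] at hST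
  obtain ⟨⟨x, hxS, hxT⟩, hx0⟩ :=
    Module.finrank_pos_iff_exists_ne_zero.1 (by omega : 0 < finrank ℝ ↥(S ⊓ T))
  exact (hS x hxS).not_gt <|
    hv.inner_map_lt_mul_inner_self hXv (fun i => i.2) hxT fun h => hx0 (Subtype.ext h)

lemma Matrix.orthonormal_toLp_transpose_of_transpose_mul_self {ι : Type*} [Fintype ι]
    [DecidableEq ι] {U : Matrix ι ι ℝ} (hU : Uᵀ * U = 1) :
    Orthonormal ℝ fun k => WithLp.toLp 2 (Uᵀ k) := by
  rw [orthonormal_iff_ite]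
  intro k l
  rw [← one_apply, ← hU]
  simp [PiLp.inner_apply, mul_apply, mul_comm]

lemma Matrix.toEuclideanLin_conj_diagonal_toLp_transpose {ι : Type*} [Fintype ι]
    [DecidableEq ι] {U : Matrix ι ι ℝ} (hU : Uᵀ * U = 1) (μ : ι → ℝ) (k : ι) :
    toEuclideanLin (U * diagonal μ * Uᵀ) (WithLp.toLp 2 (Uᵀ k)) = μ k • WithLp.toLp 2 (Uᵀ k) := by
  have hcol : Uᵀ k = U *ᵥ Pi.single k 1 := by
    ext i
    simp [mulVec_single]
  rw [toLpLin_toLp, toLin'_apply, hcol, mulVec_mulVec, Matrix.mul_assoc,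
    Matrix.mul_assoc, hU, Matrix.mul_one, ← mulVec_mulVec, diagonal_mulVec_single, mul_one,
    ← WithLp.toLp_smul, ← mulVec_smul, ← Pi.single_smul, smul_eq_mul, mul_one]

/-- Weyl's inequality `λ_{j - s}(C - B) ≥ μ_j` for `rank B ≤ s`, in counting form. -/
lemma succ_sub_rank_le_card_filter_le_eigenvalues_sub {n : ℕ} {C B : Matrix (Fin n) (Fin n) ℝ}
    (hX : (C - B).IsHermitian) {u : Fin n → EuclideanSpace ℝ (Fin n)} (hu : Orthonormal ℝ u)
    {μ : Fin n → ℝ} (hμ : Antitone μ) (hCu : ∀ k, toEuclideanLin C (u k) = μ k • u k)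
    (j : Fin n) : (j : ℕ) + 1 - B.rank ≤ #{i | μ j ≤ hX.eigenvalues i} := by
  let v : Fin (j + 1) → EuclideanSpace ℝ (Fin n) := fun k => u (Fin.castLE j.isLt k)
  have hv : Orthonormal ℝ v := hu.comp _ (Fin.castLE_injective _)
  let V := Submodule.span ℝ (Set.range v)
  let K := LinearMap.ker (toEuclideanLin B)
  have hV : finrank ℝ V = j + 1 := by
    rw [finrank_span_eq_card hv.linearIndependent, Fintype.card_fin]
  have hK : B.rank + finrank ℝ K = n := by
    rw [Matrix.rank_eq_finrank_range_toLin B (EuclideanSpace.basisFun _ ℝ).toBasis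
      (EuclideanSpace.basisFun _ ℝ).toBasis, ← toEuclideanLin_eq_toLin_orthonormal,
      LinearMap.finrank_range_add_finrank_ker, finrank_euclideanSpace_fin]
  have hVK := Submodule.finrank_add_finrank_sub_finrank_le_finrank_inf V K
  rw [finrank_euclideanSpace_fin] at hVK
  refine le_trans (by omega) (hX.finrank_le_card_filter_le_eigenvalues (S := V ⊓ K) ?_)
  rintro x ⟨hxV, hxK⟩
  have hBx : toEuclideanLin B x = 0 := hxK
  rw [map_sub, LinearMap.sub_apply, hBx, sub_zero]
  exact hv.mul_inner_self_le_inner_map (fun k => hCu _)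
    (fun k => hμ (Fin.le_def.2 (Nat.lt_succ_iff.1 k.isLt))) hxV

lemma frobeniusSq_conj_diagonal_sub_truncate {n : ℕ} {U : Matrix (Fin n) (Fin n) ℝ}
    (hU : Uᵀ * U = 1) (μ : Fin n → ℝ) (r : ℕ) :
    frobeniusSq (U * diagonal μ * Uᵀ -
      U * diagonal (fun i : Fin n => if (i : ℕ) < r then μ i else 0) * Uᵀ) =
      ∑ i : Fin n with r ≤ i.val, μ i ^ 2 := by
  rw [← Matrix.sub_mul, ← Matrix.mul_sub, diagonal_sub, frobeniusSq_conj_diagonal hU, sum_filter]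
  refine sum_congr rfl fun i _ => ?_
  by_cases hi : (i : ℕ) < r
  · simp [hi, not_le.2 hi]
  · simp [hi, not_lt.1 hi]

lemma Matrix.rank_conj_diagonal {ι : Type*} [Fintype ι] [DecidableEq ι] {U : Matrix ι ι ℝ}
    (hU : Uᵀ * U = 1) (μ : ι → ℝ) :
    (U * diagonal μ * Uᵀ).rank = Fintype.card {i // μ i ≠ 0} := by
  have hdet : IsUnit U.det := isUnit_det_of_left_inverse hU
  rw [Matrix.mul_assoc, rank_mul_eq_right_of_isUnit_det _ _ hdet,
    rank_mul_eq_left_of_isUnit_det _ _ (by rwa [det_transpose]), rank_diagonal]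

lemma Antitone.eq_zero_of_card_ne_zero_le {n : ℕ} {μ : Fin n → ℝ} (hμ : Antitone μ)
    (hμ0 : ∀ i, 0 ≤ μ i) {j : Fin n} (hj : Fintype.card {i // μ i ≠ 0} ≤ j) : μ j = 0 := by
  by_contra hμj
  have hsub : Iic j ⊆ ({i | μ i ≠ 0} : Finset (Fin n)) := fun i hi =>
    mem_filter.2 ⟨mem_univ _, ((lt_of_le_of_ne (hμ0 j) (Ne.symm hμj)).trans_le
      (hμ (mem_Iic.1 hi))).ne'⟩
  have := card_le_card hsub
  rw [Fin.card_Iic, ← Fintype.card_subtype] at this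
  omega

lemma sum_filter_min_le_sum_filter {n : ℕ} {f : Fin n → ℝ} (hf0 : ∀ j, 0 ≤ f j) {s t : ℕ}
    (hf : ∀ j : Fin n, t ≤ j → f j = 0) :
    ∑ j : Fin n with min s t ≤ j.val, f j ≤ ∑ j : Fin n with s ≤ j.val, f j := by
  rw [sum_filter, sum_filter]
  refine sum_le_sum fun j _ => ?_
  split_ifs with hmin hs
  · exact le_rfl
  · exact (hf j ((min_eq_right (by omega)).symm.trans_le hmin)).le
  · exact hf0 j
  · exact le_rfl

theorem sum_sq_tail_le_frobeniusSq_sub {n : ℕ} {C B : Matrix (Fin n) (Fin n) ℝ}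
    (hX : (C - B).IsHermitian) {u : Fin n → EuclideanSpace ℝ (Fin n)} (hu : Orthonormal ℝ u)
    {μ : Fin n → ℝ} (hμ0 : ∀ i, 0 ≤ μ i) (hμ : Antitone μ)
    (hCu : ∀ k, toEuclideanLin C (u k) = μ k • u k) {s : ℕ} (hB : B.rank ≤ s) :
    ∑ j : Fin n with s ≤ j.val, μ j ^ 2 ≤ frobeniusSq (C - B) := by
  rw [hX.frobeniusSq_eq_sum_eigenvalues_sq]
  refine sum_le_sum_of_card_filter_le_card_filter _ _ _ _ (fun i _ => sq_nonneg _) fun j hj => ?_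
  calc #{j' ∈ {j : Fin n | s ≤ j.val} | j' ≤ j}
      ≤ #(Icc s (j : ℕ)) :=
        card_le_card_of_injOn Fin.val (fun j' hj' => by simp at hj' ⊢; omega)
          Fin.val_injective.injOn
    _ ≤ (j : ℕ) + 1 - B.rank := by rw [Nat.card_Icc]; omega
    _ ≤ #{i | μ j ≤ hX.eigenvalues i} :=
        succ_sub_rank_le_card_filter_le_eigenvalues_sub hX hu hμ hCu j
    _ ≤ #{i | μ j ^ 2 ≤ hX.eigenvalues i ^ 2} :=
        card_le_card fun i hi => by
          simp only [mem_filter, mem_univ, true_and] at hi ⊢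
          exact pow_le_pow_left₀ (hμ0 j) hi 2

/-- Lower bound for the CORAL objective: with `r = min(rank C_S, rank C_T)`,
for every `A`, `‖Aᵀ C_S A - C_T‖_F ≥ ‖C_T - T_r(C_T)‖_F`, where `T_r(C_T)` keeps
the top `r` eigenpairs of `C_T`. -/
theorem coral_lower_bound (n : ℕ) (CS CT : Matrix (Fin n) (Fin n) ℝ)
    (hS : CS.PosSemidef) (hT : CT.PosSemidef)
    (UT : Matrix (Fin n) (Fin n) ℝ) (μ : Fin n → ℝ)
    (hU : UTᵀ * UT = 1) (hμ : ∀ i, 0 ≤ μ i)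
    (hdec : ∀ i j : Fin n, i ≤ j → μ j ≤ μ i)
    (hCT : CT = UT * Matrix.diagonal μ * UTᵀ)
    (r : ℕ) (hr : r = min CS.rank CT.rank)
    (Tr : Matrix (Fin n) (Fin n) ℝ)
    (hTr : Tr = UT * Matrix.diagonal (fun i : Fin n => if (i : ℕ) < r then μ i else 0) * UTᵀ) :
    ∀ A : Matrix (Fin n) (Fin n) ℝ,
      Real.sqrt (∑ i, ∑ j, ((CT - Tr) i j) ^ 2) ≤
        Real.sqrt (∑ i, ∑ j, ((Aᵀ * CS * A - CT) i j) ^ 2) := by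
  intro A
  have hB : (Aᵀ * CS * A).rank ≤ CS.rank := (rank_mul_le_left _ _).trans (rank_mul_le_right _ _)
  have hX : (CT - Aᵀ * CS * A).IsHermitian :=
    hT.isHermitian.sub (hS.conjTranspose_mul_mul_same A).isHermitian
  have hCu := toEuclideanLin_conj_diagonal_toLp_transpose hU μ
  rw [← hCT] at hCu
  have hrank : CT.rank = Fintype.card {i // μ i ≠ 0} := hCT ▸ rank_conj_diagonal hU μ
  have htail : ∀ j : Fin n, CT.rank ≤ j → μ j ^ 2 = 0 := fun j hj => by
    simp [Antitone.eq_zero_of_card_ne_zero_le hdec hμ (hrank ▸ hj)]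
  apply Real.sqrt_le_sqrt
  change frobeniusSq (CT - Tr) ≤ frobeniusSq (Aᵀ * CS * A - CT)
  calc frobeniusSq (CT - Tr) = ∑ j : Fin n with r ≤ j.val, μ j ^ 2 := by
        rw [hCT, hTr, frobeniusSq_conj_diagonal_sub_truncate hU]
    _ ≤ ∑ j : Fin n with CS.rank ≤ j.val, μ j ^ 2 :=
        hr ▸ sum_filter_min_le_sum_filter (fun j => sq_nonneg _) htail
    _ ≤ frobeniusSq (CT - Aᵀ * CS * A) :=
        sum_sq_tail_le_frobeniusSq_sub hX (orthonormal_toLp_transpose_of_transpose_mul_self hU)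
          hμ hdec hCu hB
    _ = frobeniusSq (Aᵀ * CS * A - CT) := by rw [← frobeniusSq_neg, neg_sub]
end
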